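/- arXiv:1812.01449 — 6 statements merged into one kernel-verified Lean document; each statement's English description precedes it below -/
import Mathlib

section
/- If R is a correlation matrix and R' is a rank-one correlation matrix, then the Schur product R ⊙ R' is a correlation matrix with rank(R ⊙ R') = rank(R). -/
open scoped ComplexOrder ComplexInnerProductSpace

/-- A correlation matrix: positive semidefinite with ones on the diagonal. -/
def IsCorrMat {n : ℕ} (P : Matrix (Fin n) (Fin n) ℂ) : Prop :=
  P.PosSemidef ∧ ∀ a, P a a = 1

/-- `P` is `r`-decomposable: a finite Schur (entrywise) product of correlation
matrices each of rank at most `r`. -/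
def IsDecomposable {n : ℕ} (r : ℕ) (P : Matrix (Fin n) (Fin n) ℂ) : Prop :=
  ∃ m : ℕ, 0 < m ∧ ∃ R : Fin m → Matrix (Fin n) (Fin n) ℂ,
    (∀ i, IsCorrMat (R i) ∧ (R i).rank ≤ r) ∧ ∀ a b, P a b = ∏ i, R i a b

/-!
A rank-one matrix is an outer product `vecMulVec u v`; ones on the diagonal of `R'` force
`u a * v a = 1`, so all `u a`, `v a` are units. Then `R ⊙ R' = diagonal u * R * diagonal v` is `R`
multiplied on both sides by invertible matrices, which preserves the rank, while positive
semidefiniteness of `R ⊙ R'` is the Schur product theorem.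
-/

namespace Matrix

variable {m n K : Type*} [Fintype n]

theorem exists_eq_vecMulVec_of_rank_le_one [Field K] (A : Matrix m n K) (h : A.rank ≤ 1) :
    ∃ u v, A = vecMulVec u v := by
  classical
  obtain ⟨w, hw⟩ := finrank_le_one_iff.mp h
  choose t ht using fun b => hw ⟨_, LinearMap.mem_range_self A.mulVecLin (Pi.single b 1)⟩
  refine ⟨w, t, ext fun a b => ?_⟩
  simpa [mulVec_single, vecMulVec_apply, mul_comm] using
    (congrFun (congrArg Subtype.val (ht b)) a).symm

theorem hadamard_vecMulVec [CommSemiring K] [DecidableEq n] [Fintype m] [DecidableEq m]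
    (A : Matrix m n K) (u : m → K) (v : n → K) :
    A ⊙ vecMulVec u v = diagonal u * A * diagonal v := by
  ext a b
  simp only [hadamard_apply, vecMulVec_apply, mul_diagonal, diagonal_mul]
  ring

theorem rank_hadamard_vecMulVec_of_isUnit [CommRing K] [Fintype m] (A : Matrix m n K)
    {u : m → K} {v : n → K} (hu : IsUnit u) (hv : IsUnit v) :
    (A ⊙ vecMulVec u v).rank = A.rank := by
  classical
  have hdet_u : IsUnit (diagonal u).det := (isUnit_iff_isUnit_det _).mp (isUnit_diagonal.mpr hu)
  have hdet_v : IsUnit (diagonal v).det := (isUnit_iff_isUnit_det _).mp (isUnit_diagonal.mpr hv)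
  rw [hadamard_vecMulVec, rank_mul_eq_left_of_isUnit_det _ _ hdet_v,
    rank_mul_eq_right_of_isUnit_det _ _ hdet_u]

end Matrix

/-- If `R` is a correlation matrix and `R'` a rank-one correlation matrix, then
`R ⊙ R'` is a correlation matrix of the same rank as `R`. -/
theorem stmt2 {n : ℕ} (R R' : Matrix (Fin n) (Fin n) ℂ)
    (hR : IsCorrMat R) (hR' : IsCorrMat R') (hrank : R'.rank = 1) :
    IsCorrMat (Matrix.hadamard R R') ∧ (Matrix.hadamard R R').rank = R.rank := by
  refine ⟨⟨hR.1.hadamard hR'.1, fun a => by simp [hR.2 a, hR'.2 a]⟩, ?_⟩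
  obtain ⟨u, v, rfl⟩ := R'.exists_eq_vecMulVec_of_rank_le_one hrank.le
  have huv (a : Fin n) : u a * v a = 1 := hR'.2 a
  have hu : IsUnit u := Pi.isUnit_iff.mpr fun a => .of_mul_eq_one _ (huv a)
  have hv : IsUnit v := Pi.isUnit_iff.mpr fun a => .of_mul_eq_one_right _ (huv a)
  exact R.rank_hadamard_vecMulVec_of_isUnit hu hv
end

section
/- Let P be a correlation matrix of rank at least 3 generated by unit vectors {v_a : a ∈ [n]}, and suppose some v_c is not in the span of the remaining vectors and is orthogonal to every other vector v_a (a ≠ c). Then P = R ⊙ Q where R is a correlation matrix of rank exactly rank(P) − 1 and Q is a correlation matrix of rank at most 2; in particular P is (rank(P)−1)-decomposable. -/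
open scoped ComplexOrder ComplexInnerProductSpace

/-! Since `v c` is orthogonal to every other `v a`, the Gram matrix `P` vanishes outside the two
diagonal blocks `{c}` and `{c}ᶜ`. Replacing `v c` by another unit vector `v a` changes no entry
inside these blocks, so `P = R ⊙ Q` with `R` the Gram matrix of the modified family and `Q` the
0/1 indicator of the block pattern, itself the Gram matrix of two orthonormal vectors in `ℂ²`.
As `v c` lies outside the span of the other vectors, replacing it lowers the rank by exactly one. -/

open Module Submodule Matrix Function

theorem Submodule.finrank_span_insert_of_notMem {K V : Type*} [DivisionRing K] [AddCommGroup V]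
    [Module K V] [FiniteDimensional K V] {s : Set V} {x : V} (hx : x ∉ span K s) :
    finrank K (span K (insert x s)) = finrank K (span K s) + 1 := by
  have hx0 : x ≠ 0 := fun h ↦ hx (h ▸ zero_mem _)
  have hdisj : Disjoint (span K s) (K ∙ x) := (disjoint_span_singleton' hx0).2 hx
  have h := finrank_sup_add_finrank_inf_eq (K ∙ x) (span K s)
  rw [hdisj.symm.eq_bot, finrank_bot, add_zero, finrank_span_singleton hx0] at h
  rw [span_insert]
  omega

namespace Matrix

variable {𝕜 E : Type*} [RCLike 𝕜] [NormedAddCommGroup E] [InnerProductSpace 𝕜 E]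

theorem rank_gram [FiniteDimensional 𝕜 E] {n : Type*} [Fintype n] (v : n → E) :
    (gram 𝕜 v).rank = finrank 𝕜 (span 𝕜 (Set.range v)) := by
  let b := stdOrthonormalBasis 𝕜 E
  let e := b.repr.toLinearEquiv.trans (WithLp.linearEquiv 2 𝕜 (Fin (finrank 𝕜 E) → 𝕜))
  have hcols : (of fun i j ↦ b.repr (v j) i).col = e ∘ v := rfl
  rw [gram_eq_conjTranspose_mul b, rank_conjTranspose_mul_self, rank_eq_finrank_span_cols, hcols,
    Set.range_comp, span_image_linearEquiv, LinearEquiv.finrank_map_eq]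

theorem rank_gram_le_finrank [FiniteDimensional 𝕜 E] {n : Type*} [Fintype n] (v : n → E) :
    (gram 𝕜 v).rank ≤ finrank 𝕜 E :=
  rank_gram (𝕜 := 𝕜) v ▸ Submodule.finrank_le (span 𝕜 (Set.range v))

variable {ι : Type*} [DecidableEq ι]

theorem gram_single_decide_apply (c a b : ι) :
    gram 𝕜 (fun a ↦ EuclideanSpace.single (decide (a = c)) (1 : 𝕜)) a b =
      if (a = c ↔ b = c) then 1 else 0 := by
  by_cases ha : a = c <;> by_cases hb : b = c <;>
    simp [gram_apply, EuclideanSpace.inner_single_left, ha, hb]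

theorem gram_eq_hadamard_gram_update (v : ι → E) (c a : ι) (hnorm : ‖v a‖ = ‖v c‖)
    (horth : ∀ b, b ≠ c → inner 𝕜 (v c) (v b) = 0) :
    gram 𝕜 v = gram 𝕜 (update v c (v a)) ⊙
      gram 𝕜 (fun b ↦ EuclideanSpace.single (decide (b = c)) (1 : 𝕜)) := by
  ext b b'
  rw [hadamard_apply, gram_single_decide_apply]
  by_cases hb : b = c <;> by_cases hb' : b' = c
  · subst hb hb'
    simp [gram_apply, inner_self_eq_norm_sq_to_K, hnorm]
  · subst hb
    simp [gram_apply, hb', horth b' hb']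
  · subst hb'
    rw [gram_apply, ← inner_conj_symm, horth b hb]
    simp [hb]
  · simp [gram_apply, hb, hb']

theorem rank_gram_update [FiniteDimensional 𝕜 E] [Fintype ι] (v : ι → E) {c a : ι} (hac : a ≠ c)
    (hc : v c ∉ span 𝕜 (v '' {c}ᶜ)) :
    (gram 𝕜 v).rank = (gram 𝕜 (update v c (v a))).rank + 1 := by
  have hu : Set.range (update v c (v a)) = v '' {c}ᶜ := by
    ext x
    simp only [Set.mem_range, Set.mem_image, Set.mem_compl_singleton_iff]
    constructor
    · rintro ⟨b, rfl⟩
      by_cases hb : b = c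
      · exact ⟨a, hac, by simp [hb]⟩
      · exact ⟨b, hb, by simp [hb]⟩
    · rintro ⟨b, hb, rfl⟩
      exact ⟨b, update_of_ne hb _ _⟩
  have hv : Set.range v = insert (v c) (v '' {c}ᶜ) := by
    rw [← Set.image_insert_eq, Set.insert_eq, Set.union_compl_self, Set.image_univ]
  rw [rank_gram, rank_gram, hu, hv, finrank_span_insert_of_notMem hc]

end Matrix

theorem isCorrMat_gram {n : ℕ} {E : Type*} [NormedAddCommGroup E] [InnerProductSpace ℂ E]
    (v : Fin n → E) (hv : ∀ a, ‖v a‖ = 1) : IsCorrMat (gram ℂ v) :=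
  ⟨posSemidef_gram ℂ v, fun a ↦ by simp [gram_apply, inner_self_eq_norm_sq_to_K, hv]⟩

theorem IsDecomposable.of_eq_hadamard {n r : ℕ} {P R Q : Matrix (Fin n) (Fin n) ℂ}
    (hR : IsCorrMat R) (hQ : IsCorrMat Q) (hRr : R.rank ≤ r) (hQr : Q.rank ≤ r) (hP : P = R ⊙ Q) :
    IsDecomposable r P :=
  ⟨2, two_pos, ![R, Q], fun i ↦ by fin_cases i <;> simp [hR, hQ, hRr, hQr],
    fun a b ↦ by simp [hP, Fin.prod_univ_two]⟩

/-- If `P` has rank at least 3 and is generated by unit vectors among which `v c` is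
linearly independent from (and orthogonal to) the rest, then `P = R ⊙ Q` with `R` a
correlation matrix of rank `rank P - 1` and `Q` a correlation matrix of rank at most 2;
in particular `P` is `(rank P - 1)`-decomposable. -/
theorem stmt6 (n s : ℕ) (P : Matrix (Fin n) (Fin n) ℂ)
    (v : Fin n → EuclideanSpace ℂ (Fin s)) (hv : ∀ a, ‖v a‖ = 1)
    (hgen : ∀ a b, P a b = ⟪v a, v b⟫) (hrank : 3 ≤ P.rank) (c : Fin n)
    (hc : v c ∉ Submodule.span ℂ {x | ∃ a, a ≠ c ∧ x = v a})
    (horth : ∀ a, a ≠ c → ⟪v c, v a⟫ = 0) :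
    (∃ R Q : Matrix (Fin n) (Fin n) ℂ, IsCorrMat R ∧ R.rank = P.rank - 1 ∧
      IsCorrMat Q ∧ Q.rank ≤ 2 ∧ P = Matrix.hadamard R Q) ∧
    IsDecomposable (P.rank - 1) P := by
  have hP : P = gram ℂ v := Matrix.ext hgen
  have : Nontrivial (Fin n) := Fin.nontrivial_iff_two_le.2 <| by
    have := P.rank_le_card_width
    simp only [Fintype.card_fin] at this
    omega
  obtain ⟨a, hac⟩ := exists_ne c
  have hc' : v c ∉ span ℂ (v '' {c}ᶜ) := by
    convert hc using 3
    ext x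
    simp [eq_comm]
  set R := gram ℂ (update v c (v a))
  set Q := gram ℂ (fun b ↦ EuclideanSpace.single (decide (b = c)) (1 : ℂ))
  have hPRQ : P = R ⊙ Q := hP ▸ gram_eq_hadamard_gram_update v c a (by rw [hv, hv]) horth
  have hRrank : R.rank = P.rank - 1 := by
    rw [hP, rank_gram_update v hac hc', Nat.add_sub_cancel]
  have hQrank : Q.rank ≤ 2 := (rank_gram_le_finrank _).trans (by simp)
  have hR : IsCorrMat R := isCorrMat_gram _ fun b ↦ by
    by_cases hb : b = c <;> simp [hb, hv]
  have hQ : IsCorrMat Q := isCorrMat_gram _ (by simp)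
  exact ⟨⟨R, Q, hR, hRrank, hQ, hQrank, hPRQ⟩,
    .of_eq_hadamard hR hQ hRrank.le (by omega) hPRQ⟩
end

section
/- For every integer r ≥ 2, every (r+1)×(r+1) correlation matrix is r-decomposable, i.e., Corr_r(ℂ^{r+1}) = Corr(ℂ^{r+1}). -/
/-!
If `P` is singular it already has rank at most `r`, and the identity matrix is the Schur product
of two `0/1` matrices of partitions of the `r + 1` indices into `r` blocks that never put the same
pair of indices together. Otherwise pick `a ≠ b` with `P a b ≠ 0` and divide `P` entrywise by the
rank-two correlation matrix `(cos (φ i - φ j))`, where `φ` is `t` at `a` and `0` elsewhere. At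
`t = 0` the quotient is `P`, which is positive definite; once `cos t < ‖P a b‖` its `(a, b)` entry
has modulus greater than `1`, so it is no longer positive semidefinite. The least value of the
quadratic form on the unit sphere depends continuously on `t`, so by the intermediate value theorem
some quotient in between is positive semidefinite and singular, i.e. a correlation matrix of rank
at most `r`.
-/

open scoped ComplexOrder ComplexInnerProductSpace

open Matrix Set Real

namespace Matrix

theorem rank_lt_card_of_det_eq_zero {n K : Type*} [Fintype n] [DecidableEq n] [Field K]
    {A : Matrix n n K} (h : A.det = 0) : A.rank < Fintype.card n := by
  obtain ⟨v, hv, hAv⟩ := exists_mulVec_eq_zero_iff.mpr h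
  have hker : 0 < Module.finrank K (LinearMap.ker A.mulVecLin) :=
    Module.finrank_pos_iff_exists_ne_zero.mpr ⟨⟨v, hAv⟩, fun h => hv (congrArg Subtype.val h)⟩
  have := LinearMap.finrank_range_add_finrank_ker A.mulVecLin
  rw [rank, ← Module.finrank_fintype_fun_eq_card (R := K)]
  omega

section QuadMin

variable {n 𝕜 : Type*} [Fintype n] [RCLike 𝕜]

noncomputable def quadMin (A : Matrix n n 𝕜) : ℝ :=
  sInf ((fun x => RCLike.re (star x ⬝ᵥ A *ᵥ x)) '' Metric.sphere (0 : n → 𝕜) 1)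

theorem re_star_smul_dotProduct_mulVec_smul (A : Matrix n n 𝕜) (c : 𝕜) (x : n → 𝕜) :
    RCLike.re (star (c • x) ⬝ᵥ A *ᵥ (c • x)) = ‖c‖ ^ 2 * RCLike.re (star x ⬝ᵥ A *ᵥ x) := by
  rw [star_smul, mulVec_smul, dotProduct_smul, smul_dotProduct, smul_smul, smul_eq_mul,
    RCLike.star_def, RCLike.mul_conj, ← RCLike.ofReal_pow, RCLike.re_ofReal_mul]

theorem quadMin_le (A : Matrix n n 𝕜) {x : n → 𝕜} (hx : ‖x‖ = 1) :
    quadMin A ≤ RCLike.re (star x ⬝ᵥ A *ᵥ x) :=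
  csInf_le ((isCompact_sphere 0 1).bddBelow_image (by fun_prop)) ⟨x, by simpa using hx, rfl⟩

theorem exists_re_dotProduct_mulVec_eq_quadMin [Nonempty n] (A : Matrix n n 𝕜) :
    ∃ x : n → 𝕜, ‖x‖ = 1 ∧ RCLike.re (star x ⬝ᵥ A *ᵥ x) = quadMin A := by
  obtain ⟨x, hx, hmin⟩ := (isCompact_sphere (0 : n → 𝕜) 1).exists_sInf_image_eq
    (f := fun x => RCLike.re (star x ⬝ᵥ A *ᵥ x)) (NormedSpace.sphere_nonempty.2 zero_le_one)
    (by fun_prop)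
  exact ⟨x, by simpa using hx, hmin.symm⟩

theorem re_dotProduct_mulVec_nonneg_of_quadMin_nonneg {A : Matrix n n 𝕜} (h : 0 ≤ quadMin A)
    (x : n → 𝕜) : 0 ≤ RCLike.re (star x ⬝ᵥ A *ᵥ x) := by
  rcases eq_or_ne x 0 with rfl | hx
  · simp
  have hx_eq : x = (‖x‖ : 𝕜) • ((‖x‖⁻¹ : 𝕜) • x) := by
    rw [smul_smul, mul_inv_cancel₀ (by simpa using hx), one_smul]
  rw [hx_eq, re_star_smul_dotProduct_mulVec_smul]
  exact mul_nonneg (sq_nonneg _) (h.trans (quadMin_le A (norm_smul_inv_norm hx)))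

theorem IsHermitian.posSemidef_iff_quadMin_nonneg {A : Matrix n n 𝕜} (hA : A.IsHermitian) :
    A.PosSemidef ↔ 0 ≤ quadMin A := by
  refine ⟨fun h => Real.sInf_nonneg ?_, fun h => .of_dotProduct_mulVec_nonneg hA fun x => ?_⟩
  · rintro _ ⟨x, -, rfl⟩
    exact (RCLike.nonneg_iff.mp (h.dotProduct_mulVec_nonneg x)).1
  · exact RCLike.nonneg_iff.mpr
      ⟨re_dotProduct_mulVec_nonneg_of_quadMin_nonneg h x, hA.im_star_dotProduct_mulVec_self x⟩

theorem PosDef.quadMin_pos [Nonempty n] {A : Matrix n n 𝕜} (hA : A.PosDef) : 0 < quadMin A := by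
  obtain ⟨x, hx, hmin⟩ := exists_re_dotProduct_mulVec_eq_quadMin A
  rw [← hmin]
  exact (RCLike.pos_iff.mp (hA.dotProduct_mulVec_pos (by rintro rfl; simp at hx))).1

theorem continuous_quadMin {X : Type*} [TopologicalSpace X] {A : X → Matrix n n 𝕜}
    (hA : Continuous A) : Continuous fun t => quadMin (A t) :=
  (isCompact_sphere 0 1).continuous_sInf (by fun_prop)

theorem _root_.ContinuousOn.quadMin {X : Type*} [TopologicalSpace X] {A : X → Matrix n n 𝕜}
    {s : Set X} (hA : ContinuousOn A s) : ContinuousOn (fun t => quadMin (A t)) s := by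
  rw [continuousOn_iff_continuous_domRestrict] at hA ⊢
  exact continuous_quadMin hA

theorem exists_posSemidef_det_eq_zero_of_continuousOn [DecidableEq n] [Nonempty n]
    {A : ℝ → Matrix n n 𝕜} {c : ℝ} (hc : 0 ≤ c) (hA : ContinuousOn A (Icc 0 c))
    (hA_herm : ∀ t, (A t).IsHermitian) (hA0 : (A 0).PosDef) (hAc : ¬ (A c).PosSemidef) :
    ∃ t ∈ Icc 0 c, (A t).PosSemidef ∧ (A t).det = 0 := by
  obtain ⟨t, ht, hzero⟩ : ∃ t ∈ Icc 0 c, quadMin (A t) = 0 :=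
    intermediate_value_Icc' hc hA.quadMin
      ⟨le_of_not_ge fun h => hAc ((hA_herm c).posSemidef_iff_quadMin_nonneg.2 h),
        hA0.quadMin_pos.le⟩
  have hAt : (A t).PosSemidef := (hA_herm t).posSemidef_iff_quadMin_nonneg.2 hzero.ge
  refine ⟨t, ht, hAt, ?_⟩
  by_contra h
  exact (hAt.posDef_iff_det_ne_zero.2 h).quadMin_pos.ne' hzero

end QuadMin

section Constructions

variable {ι : Type*}

noncomputable def hadamardDiv (A C : Matrix ι ι ℂ) : Matrix ι ι ℂ :=
  of fun i j => A i j / C i j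

theorem IsHermitian.hadamardDiv {A C : Matrix ι ι ℂ} (hA : A.IsHermitian) (hC : C.IsHermitian) :
    (hadamardDiv A C).IsHermitian := by
  ext i j
  simp only [Matrix.hadamardDiv, conjTranspose_apply, of_apply, star_div₀, hA.apply, hC.apply]

theorem hadamardDiv_hadamard {A C : Matrix ι ι ℂ} (hC : ∀ i j, C i j ≠ 0) :
    hadamardDiv A C ⊙ C = A := by
  ext i j
  exact div_mul_cancel₀ _ (hC i j)

theorem _root_.ContinuousOn.hadamardDiv {X : Type*} [TopologicalSpace X] {A : Matrix ι ι ℂ}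
    {C : X → Matrix ι ι ℂ} {s : Set X} (hC : ContinuousOn C s) (hC0 : ∀ t ∈ s, ∀ i j, C t i j ≠ 0) :
    ContinuousOn (fun t => hadamardDiv A (C t)) s :=
  continuousOn_pi.2 fun i => continuousOn_pi.2 fun j =>
    continuousOn_const.div ((continuous_apply_apply i j).comp_continuousOn hC) fun t ht =>
      hC0 t ht i j

noncomputable def cosGram (φ : ι → ℝ) : Matrix ι ι ℂ :=
  of fun i j => (Real.cos (φ i - φ j) : ℂ)

theorem cosGram_apply (φ : ι → ℝ) (i j : ι) : cosGram φ i j = (Real.cos (φ i - φ j) : ℂ) :=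
  rfl

theorem cosGram_eq_self_mul_conjTranspose (φ : ι → ℝ) :
    cosGram φ = (of fun i => ![(Real.cos (φ i) : ℂ), (Real.sin (φ i) : ℂ)]) *
      (of fun i => ![(Real.cos (φ i) : ℂ), (Real.sin (φ i) : ℂ)])ᴴ := by
  ext i j
  simp [cosGram, mul_apply, Fin.sum_univ_two, Real.cos_sub, -Complex.ofReal_cos,
    -Complex.ofReal_sin]

theorem continuous_cosGram {X : Type*} [TopologicalSpace X] {φ : X → ι → ℝ} (hφ : Continuous φ) :
    Continuous fun t => cosGram (φ t) :=
  continuous_pi fun i => continuous_pi fun j => Complex.continuous_ofReal.comp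
    (Real.continuous_cos.comp (((continuous_apply i).comp hφ).sub ((continuous_apply j).comp hφ)))

def partitionMatrix {κ : Type*} [DecidableEq κ] (g : ι → κ) : Matrix ι ι ℂ :=
  of fun i j => if g i = g j then 1 else 0

theorem partitionMatrix_eq_self_mul_conjTranspose {κ : Type*} [Fintype κ] [DecidableEq κ]
    (g : ι → κ) :
    partitionMatrix g = (of fun i k => if g i = k then (1 : ℂ) else 0) *
      (of fun i k => if g i = k then (1 : ℂ) else 0)ᴴ := by
  ext i j
  simp [partitionMatrix, mul_apply]

theorem hadamard_partitionMatrix_eq_one [DecidableEq ι] {κ κ' : Type*} [DecidableEq κ]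
    [DecidableEq κ'] {g : ι → κ} {g' : ι → κ'} (hg : Function.Injective fun i => (g i, g' i)) :
    partitionMatrix g ⊙ partitionMatrix g' = 1 := by
  ext i j
  by_cases h : i = j
  · simp [partitionMatrix, h, one_apply]
  · have hg' := mt (@hg i j) h
    simp only [Prod.mk.injEq, not_and] at hg'
    by_cases h1 : g i = g j <;> simp [partitionMatrix, h, h1, hg']

end Constructions

end Matrix

section Correlation

variable {n r : ℕ}

theorem IsCorrMat.isDecomposable {P : Matrix (Fin n) (Fin n) ℂ} (hP : IsCorrMat P)
    (hr : P.rank ≤ r) : IsDecomposable r P :=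
  ⟨1, one_pos, fun _ => P, fun _ => ⟨hP, hr⟩, fun a b => by simp⟩

theorem isDecomposable_hadamard {Q R : Matrix (Fin n) (Fin n) ℂ} (hQ : IsCorrMat Q)
    (hQr : Q.rank ≤ r) (hR : IsCorrMat R) (hRr : R.rank ≤ r) : IsDecomposable r (Q ⊙ R) := by
  refine ⟨2, two_pos, ![Q, R], fun i => ?_, fun a b => by simp [Fin.prod_univ_two]⟩
  fin_cases i
  exacts [⟨hQ, hQr⟩, ⟨hR, hRr⟩]

theorem IsCorrMat.norm_apply_le_one {P : Matrix (Fin n) (Fin n) ℂ} (hP : IsCorrMat P)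
    (a b : Fin n) : ‖P a b‖ ≤ 1 := by
  have hdet := (hP.1.submatrix ![a, b]).det_nonneg
  rw [det_fin_two] at hdet
  simp only [submatrix_apply, cons_val_zero, cons_val_one, hP.2] at hdet
  rw [← hP.1.1.apply b a, RCLike.star_def, Complex.mul_conj', one_mul, sub_nonneg] at hdet
  exact (sq_le_one_iff₀ (norm_nonneg _)).mp (by exact_mod_cast hdet)

theorem isCorrMat_self_mul_conjTranspose {κ : Type*} [Fintype κ] {W : Matrix (Fin n) κ ℂ}
    (hW : ∀ i, (W * Wᴴ) i i = 1) : IsCorrMat (W * Wᴴ) :=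
  ⟨posSemidef_self_mul_conjTranspose W, hW⟩

theorem rank_self_mul_conjTranspose_le {κ : Type*} [Fintype κ] (W : Matrix (Fin n) κ ℂ) :
    (W * Wᴴ).rank ≤ Fintype.card κ :=
  (rank_self_mul_conjTranspose W).trans_le (rank_le_card_width W)

theorem isCorrMat_cosGram (φ : Fin n → ℝ) : IsCorrMat (cosGram φ) := by
  rw [cosGram_eq_self_mul_conjTranspose]
  exact isCorrMat_self_mul_conjTranspose fun i => by
    rw [← cosGram_eq_self_mul_conjTranspose]; simp [cosGram]

theorem rank_cosGram_le (φ : Fin n → ℝ) : (cosGram φ).rank ≤ 2 := by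
  rw [cosGram_eq_self_mul_conjTranspose]
  exact (rank_self_mul_conjTranspose_le _).trans_eq (Fintype.card_fin 2)

theorem isCorrMat_partitionMatrix {κ : Type*} [Fintype κ] [DecidableEq κ] (g : Fin n → κ) :
    IsCorrMat (partitionMatrix g) := by
  rw [partitionMatrix_eq_self_mul_conjTranspose]
  exact isCorrMat_self_mul_conjTranspose fun i => by
    rw [← partitionMatrix_eq_self_mul_conjTranspose]; simp [partitionMatrix]

theorem rank_partitionMatrix_le {κ : Type*} [Fintype κ] [DecidableEq κ] (g : Fin n → κ) :
    (partitionMatrix g).rank ≤ Fintype.card κ := by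
  rw [partitionMatrix_eq_self_mul_conjTranspose]
  exact rank_self_mul_conjTranspose_le _

theorem isDecomposable_one (hr : 2 ≤ r) :
    IsDecomposable r (1 : Matrix (Fin (r + 1)) (Fin (r + 1)) ℂ) := by
  let g₁ : Fin (r + 1) → Fin r := fun i => ⟨min i (r - 1), by omega⟩
  let g₂ : Fin (r + 1) → Fin r := fun i => ⟨i - 1, by omega⟩
  have hg : Function.Injective fun i => (g₁ i, g₂ i) := by
    intro i j h
    simp only [Prod.mk.injEq, Fin.ext_iff, g₁, g₂] at h
    omega
  rw [← hadamard_partitionMatrix_eq_one hg]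
  exact isDecomposable_hadamard (isCorrMat_partitionMatrix g₁)
    ((rank_partitionMatrix_le g₁).trans_eq (Fintype.card_fin r)) (isCorrMat_partitionMatrix g₂)
    ((rank_partitionMatrix_le g₂).trans_eq (Fintype.card_fin r))

theorem cos_single_sub_single_pos (a : Fin n) {t : ℝ} (ht₀ : 0 ≤ t) (ht : t < π / 2)
    (i j : Fin n) :
    0 < Real.cos ((Pi.single a t : Fin n → ℝ) i - (Pi.single a t : Fin n → ℝ) j) := by
  have hmem : ∀ k, (Pi.single a t : Fin n → ℝ) k ∈ Icc 0 t := fun k => by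
    rcases eq_or_ne k a with rfl | hk
    · simpa using ht₀
    · simpa [hk] using ht₀
  exact Real.cos_pos_of_mem_Ioo ⟨by linarith [(hmem i).1, (hmem j).2],
    by linarith [(hmem i).2, (hmem j).1]⟩

theorem IsCorrMat.exists_singular_hadamard_cosGram {P : Matrix (Fin n) (Fin n) ℂ}
    (hP : IsCorrMat P) (hdet : P.det ≠ 0) {a b : Fin n} (hab : a ≠ b) (hPab : P a b ≠ 0) :
    ∃ Q : Matrix (Fin n) (Fin n) ℂ, IsCorrMat Q ∧ Q.det = 0 ∧ ∃ φ : Fin n → ℝ,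
      P = Q ⊙ cosGram φ := by
  have : Nonempty (Fin n) := ⟨a⟩
  have hPab_pos : 0 < ‖P a b‖ := norm_pos_iff.2 hPab
  set c := Real.arccos (‖P a b‖ / 2)
  have hc₀ : 0 ≤ c := Real.arccos_nonneg _
  have hc : c < π / 2 := Real.arccos_lt_pi_div_two.2 (by positivity)
  have hcos_c : Real.cos c < ‖P a b‖ := by
    rw [Real.cos_arccos (by linarith) (by linarith [hP.norm_apply_le_one a b])]
    linarith
  have hC0 : ∀ t ∈ Icc 0 c, ∀ i j, cosGram (Pi.single a t) i j ≠ 0 := fun t ht i j => by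
    rw [cosGram_apply]
    exact_mod_cast (cos_single_sub_single_pos a ht.1 (ht.2.trans_lt hc) i j).ne'
  have hR_diag : ∀ t i, hadamardDiv P (cosGram (Pi.single a t)) i i = 1 := fun t i => by
    simp [hadamardDiv, cosGram, hP.2]
  have hR0 : hadamardDiv P (cosGram (Pi.single a (0 : ℝ))) = P := by
    ext i j
    simp [hadamardDiv, cosGram]
  have hRc : ¬ (hadamardDiv P (cosGram (Pi.single a c))).PosSemidef := fun h => by
    have hnorm := IsCorrMat.norm_apply_le_one ⟨h, hR_diag c⟩ a b
    have hcos : 0 < Real.cos c := Real.cos_pos_of_mem_Ioo ⟨by linarith, hc⟩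
    simp only [hadamardDiv, cosGram, of_apply, Pi.single_eq_same, Pi.single_eq_of_ne hab.symm,
      sub_zero, norm_div, Complex.norm_real, Real.norm_of_nonneg hcos.le] at hnorm
    rw [div_le_one hcos] at hnorm
    linarith
  obtain ⟨t, ht, hRt, hRt_det⟩ := exists_posSemidef_det_eq_zero_of_continuousOn hc₀
    ((continuous_cosGram (continuous_single (A := fun _ : Fin n => ℝ) a)).continuousOn.hadamardDiv
      hC0)
    (fun t => hP.1.1.hadamardDiv (isCorrMat_cosGram _).1.1)
    (by rw [hR0]; exact hP.1.posDef_iff_det_ne_zero.2 hdet) hRc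
  exact ⟨_, ⟨hRt, hR_diag t⟩, hRt_det, Pi.single a t, (hadamardDiv_hadamard (hC0 t ht)).symm⟩

end Correlation

/-- For every `r ≥ 2`, every `(r+1) × (r+1)` correlation matrix is `r`-decomposable. -/
theorem stmt8 (r : ℕ) (hr : 2 ≤ r) (P : Matrix (Fin (r + 1)) (Fin (r + 1)) ℂ)
    (hP : IsCorrMat P) : IsDecomposable r P := by
  have rank_le_of_det_eq_zero : ∀ {Q : Matrix (Fin (r + 1)) (Fin (r + 1)) ℂ}, Q.det = 0 →
      Q.rank ≤ r := fun h => Nat.lt_succ_iff.mp (by simpa using rank_lt_card_of_det_eq_zero h)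
  by_cases hdet : P.det = 0
  · exact hP.isDecomposable (rank_le_of_det_eq_zero hdet)
  by_cases hoff : ∃ a b, a ≠ b ∧ P a b ≠ 0
  · obtain ⟨a, b, hab, hPab⟩ := hoff
    obtain ⟨Q, hQ, hQ_det, φ, rfl⟩ := hP.exists_singular_hadamard_cosGram hdet hab hPab
    exact isDecomposable_hadamard hQ (rank_le_of_det_eq_zero hQ_det) (isCorrMat_cosGram φ)
      ((rank_cosGram_le φ).trans hr)
  · have hP_one : P = 1 := by
      ext i j
      rcases eq_or_ne i j with rfl | hij
      · simp [hP.2]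
      · simpa [hij] using not_exists.mp (not_exists.mp hoff i) j
    exact hP_one ▸ isDecomposable_one hr
end

section
/- Let x₁, x₂ be product vectors in a tensor product 𝒳₁ ⊗ ... ⊗ 𝒳ₘ of complex Euclidean spaces, with x_k = x_{k,1} ⊗ ... ⊗ x_{k,m}. If there exist nonzero scalars α₁, α₂ such that α₁x₁ + α₂x₂ is a product vector or zero, then there is at most one index j ∈ [m] for which x_{1,j} and x_{2,j} are linearly independent. -/
open scoped ComplexInnerProductSpace

/-- The elementary tensor of the vectors `x j`, realized concretely in the
Euclidean space indexed by the product of the index sets. -/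
def elemTensor {m : ℕ} {d : Fin m → ℕ} (x : ∀ j, EuclideanSpace ℂ (Fin (d j))) :
    EuclideanSpace ℂ (∀ j, Fin (d j)) :=
  WithLp.toLp 2 (fun f => ∏ j, x j (f j))

/-- A product vector: a (necessarily nonzero) elementary tensor of nonzero vectors. -/
def IsProdVec {m : ℕ} {d : Fin m → ℕ} (y : EuclideanSpace ℂ (∀ j, Fin (d j))) : Prop :=
  ∃ z : ∀ j, EuclideanSpace ℂ (Fin (d j)), (∀ j, z j ≠ 0) ∧ y = elemTensor z

/-!
Split off the `j`-th factor: with `Xᵢ` the tensor product of the other factors of `xᵢ`, the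
hypothesis reads `α₁ x₁ⱼ ⊗ X₁ + α₂ x₂ⱼ ⊗ X₂ = zⱼ ⊗ Z` (with `z = 0` in the zero case). Reading
this off at each coordinate of the remaining factors and using the independence of `x₁ⱼ, x₂ⱼ`
makes `X₁` and `X₂` multiples of `Z`, so `X₂` is a multiple of `X₁ ≠ 0`. Then each factor
`x₂ₖ` with `k ≠ j` is a multiple of `x₁ₖ`.
-/

open Finset

theorem LinearIndependent.exists_eq_mul_of_pair {K M β : Type*} [Field K] [AddCommGroup M]
    [Module K M] {u v w : M} (huv : LinearIndependent K ![u, v]) {p q r : β → K}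
    (h : ∀ b, p b • u + q b • v = r b • w) {b₀ : β} (hb₀ : p b₀ ≠ 0) :
    ∃ c : K, ∀ b, q b = c * p b := by
  have hr₀ : r b₀ ≠ 0 := fun hr => hb₀ (huv.eq_zero_of_pair (by simpa [hr] using h b₀)).1
  refine ⟨q b₀ / p b₀, fun b => ?_⟩
  have hcoeff : r b₀ * p b = r b * p b₀ ∧ r b₀ * q b = r b * q b₀ :=
    huv.eq_of_pair (by rw [mul_smul, mul_smul, mul_smul, mul_smul, ← smul_add, ← smul_add, h, h,
      smul_comm])
  field_simp
  refine mul_left_cancel₀ hr₀ ?_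
  linear_combination p b₀ * hcoeff.2 - q b₀ * hcoeff.1

section ProdApply

variable {ι : Type*} {κ : ι → Type*}

theorem exists_forall_apply_ne_zero {R : Type*} [Zero R] {u : ∀ i, κ i → R}
    (hu : ∀ i, u i ≠ 0) : ∃ g : ∀ i, κ i, ∀ i, u i (g i) ≠ 0 := by
  choose g hg using fun i => Function.ne_iff.1 (hu i)
  exact ⟨g, hg⟩

variable [DecidableEq ι]

theorem Finset.prod_apply_update_of_mem {R : Type*} [CommMonoid R] (u : ∀ i, κ i → R)
    {s : Finset ι} {j : ι} (hj : j ∈ s) (g : ∀ i, κ i) (a : κ j) :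
    ∏ i ∈ s, u i (Function.update g j a i) = u j a * ∏ i ∈ s.erase j, u i (g i) := by
  rw [← mul_prod_erase s _ hj, Function.update_self]
  congr 1
  exact prod_congr rfl fun i hi => by rw [Function.update_of_ne (ne_of_mem_erase hi)]

theorem exists_eq_smul_of_prod_eq_mul {K : Type*} [Field K] {u v : ∀ i, κ i → K}
    (hu : ∀ i, u i ≠ 0) {s : Finset ι} {c : K}
    (H : ∀ g : ∀ i, κ i, ∏ i ∈ s, u i (g i) = c * ∏ i ∈ s, v i (g i)) {k : ι} (hk : k ∈ s) :
    ∃ t : K, u k = t • v k := by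
  obtain ⟨g, hg⟩ := exists_forall_apply_ne_zero hu
  have hA : ∏ i ∈ s.erase k, u i (g i) ≠ 0 := prod_ne_zero_iff.2 fun i _ => hg i
  refine ⟨c * (∏ i ∈ s.erase k, v i (g i)) / ∏ i ∈ s.erase k, u i (g i), funext fun a => ?_⟩
  have key := H (Function.update g k a)
  rw [prod_apply_update_of_mem u hk, prod_apply_update_of_mem v hk] at key
  rw [Pi.smul_apply, smul_eq_mul]
  field_simp
  linear_combination key

end ProdApply

section ElemTensor

variable {m : ℕ} {d : Fin m → ℕ}

theorem elemTensor_apply_update (x : ∀ j, EuclideanSpace ℂ (Fin (d j))) (j : Fin m)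
    (g : ∀ l, Fin (d l)) (a : Fin (d j)) :
    elemTensor x (Function.update g j a) = x j a * ∏ l ∈ univ.erase j, x l (g l) :=
  prod_apply_update_of_mem (fun l => ⇑(x l)) (mem_univ j) g a

theorem elemTensor_eq_zero_of_eq_zero {x : ∀ j, EuclideanSpace ℂ (Fin (d j))} {j : Fin m}
    (hj : x j = 0) : elemTensor x = 0 := by
  ext g
  exact prod_eq_zero (mem_univ j) (by simp [hj])

theorem smul_add_smul_eq_smul_of_elemTensor {x₁ x₂ z : ∀ j, EuclideanSpace ℂ (Fin (d j))}
    {α₁ α₂ : ℂ} (hz : α₁ • elemTensor x₁ + α₂ • elemTensor x₂ = elemTensor z) (j : Fin m)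
    (g : ∀ l, Fin (d l)) :
    (α₁ * ∏ l ∈ univ.erase j, x₁ l (g l)) • x₁ j + (α₂ * ∏ l ∈ univ.erase j, x₂ l (g l)) • x₂ j =
      (∏ l ∈ univ.erase j, z l (g l)) • z j := by
  ext a
  have key := congrArg (· (Function.update g j a)) hz
  simp only [PiLp.add_apply, PiLp.smul_apply, smul_eq_mul, elemTensor_apply_update] at key ⊢
  linear_combination key

end ElemTensor

/-- If a nontrivial linear combination of two product vectors is zero or a product
vector, then their factors are linearly independent in at most one subsystem. -/
theorem stmt9 (m : ℕ) (d : Fin m → ℕ)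
    (x₁ x₂ : ∀ j, EuclideanSpace ℂ (Fin (d j)))
    (h₁ : ∀ j, x₁ j ≠ 0) (h₂ : ∀ j, x₂ j ≠ 0)
    (α₁ α₂ : ℂ) (hα₁ : α₁ ≠ 0) (hα₂ : α₂ ≠ 0)
    (h : α₁ • elemTensor x₁ + α₂ • elemTensor x₂ = 0 ∨
      IsProdVec (α₁ • elemTensor x₁ + α₂ • elemTensor x₂)) :
    ∀ j k, LinearIndependent ℂ ![x₁ j, x₂ j] → LinearIndependent ℂ ![x₁ k, x₂ k] →
      j = k := by
  intro j k hj hk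
  by_contra hjk
  obtain ⟨z, hz⟩ : ∃ z, α₁ • elemTensor x₁ + α₂ • elemTensor x₂ = elemTensor z := by
    rcases h with h0 | ⟨z, -, hz⟩
    · exact ⟨0, h0.trans (elemTensor_eq_zero_of_eq_zero (j := j) rfl).symm⟩
    · exact ⟨z, hz⟩
  obtain ⟨g₀, hg₀⟩ := exists_forall_apply_ne_zero (u := fun l => ⇑(x₁ l))
    fun l => by simpa using h₁ l
  obtain ⟨c, hc⟩ := hj.exists_eq_mul_of_pair (smul_add_smul_eq_smul_of_elemTensor hz j)
    (b₀ := g₀) (mul_ne_zero hα₁ (prod_ne_zero_iff.2 fun l _ => hg₀ l))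
  have hprod : ∀ g : ∀ l, Fin (d l),
      ∏ l ∈ univ.erase j, x₂ l (g l) = c * α₁ / α₂ * ∏ l ∈ univ.erase j, x₁ l (g l) :=
    fun g => by field_simp; linear_combination hc g
  obtain ⟨t, ht⟩ : ∃ t : ℂ, ⇑(x₂ k) = t • ⇑(x₁ k) :=
    exists_eq_smul_of_prod_eq_mul (fun l => by simpa using h₂ l) hprod
      (mem_erase.2 ⟨Ne.symm hjk, mem_univ k⟩)
  have hdep : t • x₁ k = (1 : ℂ) • x₂ k :=
    WithLp.ofLp_injective 2 (by simpa using ht.symm)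
  exact one_ne_zero (hk.eq_zero_of_pair' hdep).2
end

section
/- Every extreme point of the convex set of n×n correlation matrices has rank at most ⌊√n⌋; consequently, every extreme point of Corr(ℂ^{2r+1}) is r-decomposable for r ≥ 2. -/
open scoped ComplexOrder ComplexInnerProductSpace

/-!
Write an extreme correlation matrix of rank `k` as `P = Bᴴ B` with `B` a `k × n` matrix of full
row rank. The diagonal of `Bᴴ A B` is a linear function of `A` with `n` complex coordinates, so if
`k² > n` some nonzero Hermitian `A` has `diag (Bᴴ A B) = 0`. For small `ε > 0` both
`Bᴴ (1 ± ε A) B = P ± ε Bᴴ A B` are correlation matrices with midpoint `P`; extremality forces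
`Bᴴ A B = 0`, hence `A = 0`. So `k ≤ ⌊√n⌋`, and `⌊√(2r+1)⌋ ≤ r` makes every extreme point of
`Corr(ℂ^{2r+1})` a one-factor Schur product of correlation matrices of rank at most `r`.
-/

theorem eq_zero_of_add_mem_of_sub_mem_of_mem_extremePoints {𝕜 E : Type*} [Field 𝕜]
    [LinearOrder 𝕜] [IsStrictOrderedRing 𝕜] [AddCommGroup E] [Module 𝕜 E] {s : Set E} {x y : E}
    (hx : x ∈ s.extremePoints 𝕜) (hadd : x + y ∈ s) (hsub : x - y ∈ s) : y = 0 := by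
  have hmid : x ∈ openSegment 𝕜 (x + y) (x - y) :=
    ⟨2⁻¹, 2⁻¹, by norm_num, by norm_num, by norm_num, by module⟩
  simpa using ((mem_extremePoints.mp hx).2 _ hadd _ hsub hmid).1

namespace Matrix

theorem submatrix_mul_submatrix_of_injective {l m n κ α : Type*} [Fintype m] [Fintype κ]
    [NonUnitalNonAssocSemiring α] (A : Matrix l m α) (B : Matrix m n α) {f : κ → m}
    (hf : Function.Injective f) (hB : ∀ i ∉ Set.range f, B i = 0) :
    A.submatrix id f * B.submatrix f id = A * B := by
  ext a b
  exact Fintype.sum_of_injective f hf _ _ (fun i hi => by simp [hB i hi]) fun _ => rfl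

theorem eq_zero_of_conjTranspose_mul_mul_eq_zero {κ m R : Type*} [Fintype κ] [Fintype m]
    [DecidableEq κ] [Semiring R] [StarRing R] {B : Matrix κ m R} {A : Matrix κ κ R}
    (hB : IsUnit (B * Bᴴ)) (h : Bᴴ * A * B = 0) : A = 0 := by
  have : B * Bᴴ * A * (B * Bᴴ) = 0 := by
    rw [show B * Bᴴ * A * (B * Bᴴ) = B * (Bᴴ * A * B) * Bᴴ by simp only [Matrix.mul_assoc], h,
      Matrix.mul_zero, Matrix.zero_mul]
  rwa [hB.mul_left_eq_zero, hB.mul_right_eq_zero] at this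

theorem PosSemidef.exists_conjTranspose_mul_self_eq {𝕜 n : Type*} [RCLike 𝕜] [Fintype n]
    [DecidableEq n] {P : Matrix n n 𝕜} (hP : P.PosSemidef) :
    ∃ B : Matrix (Fin P.rank) n 𝕜, Bᴴ * B = P ∧ IsUnit (B * Bᴴ) := by
  set μ := hP.1.eigenvalues
  set U : Matrix n n 𝕜 := (hP.1.eigenvectorUnitary : Matrix n n 𝕜)
  set D : Matrix n n 𝕜 := diagonal (fun i => (√(μ i) : 𝕜))
  have hD : Dᴴ = D := by simp [D, diagonal_conjTranspose]
  have hDD : D * D = diagonal (fun i => (μ i : 𝕜)) := by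
    rw [diagonal_mul_diagonal]
    congr! 2 with i
    rw [← RCLike.ofReal_mul, Real.mul_self_sqrt (hP.eigenvalues_nonneg i)]
  have hUU : Uᴴ * U = 1 := Unitary.coe_star_mul_self _
  have hB₀ : (D * star U)ᴴ * (D * star U) = P := by
    conv_rhs => rw [hP.1.spectral_theorem, Unitary.conjStarAlgAut_apply]
    rw [conjTranspose_mul, hD, star_eq_conjTranspose, conjTranspose_conjTranspose,
      Matrix.mul_assoc, ← Matrix.mul_assoc D, hDD, ← Matrix.mul_assoc]
    rfl
  have hB₀' : D * star U * (D * star U)ᴴ = diagonal (fun i => (μ i : 𝕜)) := by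
    rw [conjTranspose_mul, hD, star_eq_conjTranspose, conjTranspose_conjTranspose,
      Matrix.mul_assoc, ← Matrix.mul_assoc Uᴴ, hUU, Matrix.one_mul, hDD]
  -- keep the rows of `D * star U` at the nonzero eigenvalues; the others vanish
  let e : Fin P.rank ≃ {i // μ i ≠ 0} :=
    (Fintype.equivFinOfCardEq hP.1.rank_eq_card_non_zero_eigs.symm).symm
  have he : Function.Injective (fun i => (e i : n)) := Subtype.val_injective.comp e.injective
  refine ⟨(D * star U).submatrix (fun i => e i) id, ?_, ?_⟩
  · rw [conjTranspose_submatrix, submatrix_mul_submatrix_of_injective _ _ he, hB₀]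
    intro i hi
    have hμ : μ i = 0 := by simpa using fun h => hi ⟨e.symm ⟨i, h⟩, by simp⟩
    ext a
    simp [D, hμ]
  · rw [conjTranspose_submatrix, ← submatrix_mul _ _ _ _ _ Function.bijective_id, hB₀',
      submatrix_diagonal _ _ he, isUnit_diagonal, Pi.isUnit_iff]
    exact fun i => (RCLike.ofReal_ne_zero.mpr (e i).2).isUnit

open scoped MatrixOrder Norms.L2Operator in
theorem IsHermitian.exists_posSemidef_one_add_smul_one_sub_smul {n : Type*} [Fintype n]
    [DecidableEq n] {A : Matrix n n ℂ} (hA : A.IsHermitian) :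
    ∃ ε : ℝ, 0 < ε ∧ (1 + ε • A).PosSemidef ∧ (1 - ε • A).PosSemidef := by
  set ε : ℝ := (‖A‖ + 1)⁻¹
  have hε : 0 < ε := by positivity
  have hsa : IsSelfAdjoint (ε • A) := .smul (IsSelfAdjoint.all ε) hA
  -- `-‖a‖ ≤ a ≤ ‖a‖` for self-adjoint `a` in a C⋆-algebra, and `‖ε • A‖ ≤ 1`
  have hle : algebraMap ℝ (Matrix n n ℂ) ‖ε • A‖ ≤ 1 := by
    rw [← map_one (algebraMap ℝ (Matrix n n ℂ))]
    apply algebraMap_mono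
    rw [norm_smul, Real.norm_of_nonneg hε.le, inv_mul_le_one₀ (by positivity)]
    linarith
  refine ⟨ε, hε, ?_, ?_⟩
  · rw [← nonneg_iff_posSemidef, ← neg_le_iff_add_nonneg']
    exact hsa.neg_algebraMap_norm_le_self.trans' (neg_le_neg hle)
  · rw [← nonneg_iff_posSemidef, sub_nonneg]
    exact hsa.le_algebraMap_norm_self.trans hle

theorem exists_isHermitian_ne_zero_diag_conjTranspose_mul_mul_eq_zero {m κ : Type*} [Fintype m]
    [Fintype κ] (B : Matrix κ m ℂ) (h : Fintype.card m < Fintype.card κ ^ 2) :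
    ∃ A : Matrix κ κ ℂ, A.IsHermitian ∧ A ≠ 0 ∧ (Bᴴ * A * B).diag = 0 := by
  let L : Matrix κ κ ℂ →ₗ[ℂ] m → ℂ :=
    { toFun := fun M => (Bᴴ * M * B).diag
      map_add' := fun M N => by simp [Matrix.mul_add, Matrix.add_mul]
      map_smul' := fun c M => by simp }
  obtain ⟨M, hML, hM⟩ := Submodule.ne_bot_iff _ |>.mp <| L.ker_ne_bot_of_finrank_lt <| by
    simpa [Module.finrank_matrix, sq] using h
  have hMdiag : (Bᴴ * M * B).diag = 0 := hML
  have hMHdiag : (Bᴴ * Mᴴ * B).diag = 0 := by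
    rw [← conjTranspose_conjTranspose B, ← conjTranspose_mul, ← conjTranspose_mul,
      conjTranspose_conjTranspose, ← Matrix.mul_assoc, diag_conjTranspose, hMdiag, star_zero]
  -- if `M + Mᴴ = 0` then `i • M` is Hermitian instead
  by_cases hskew : M + Mᴴ = 0
  · refine ⟨Complex.I • M, ?_, by simpa using hM, by simp [hMdiag]⟩
    rw [IsHermitian, conjTranspose_smul, eq_neg_of_add_eq_zero_right hskew]
    simp
  · refine ⟨M + Mᴴ, ?_, hskew, ?_⟩
    · simp [IsHermitian, add_comm]
    · simp [Matrix.mul_add, Matrix.add_mul, hMdiag, hMHdiag]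

end Matrix

open Matrix

theorem IsCorrMat.add_conjTranspose_mul_mul {n : ℕ} {κ : Type*} [Fintype κ] [DecidableEq κ]
    {B : Matrix κ (Fin n) ℂ} {E : Matrix κ κ ℂ} (hB : IsCorrMat (Bᴴ * B))
    (hE : (1 + E).PosSemidef) (hdiag : (Bᴴ * E * B).diag = 0) :
    IsCorrMat (Bᴴ * B + Bᴴ * E * B) := by
  have hexpand : Bᴴ * (1 + E) * B = Bᴴ * B + Bᴴ * E * B := by
    rw [Matrix.mul_add, Matrix.add_mul, Matrix.mul_one]
  refine ⟨hexpand ▸ hE.conjTranspose_mul_mul_same B, fun a => ?_⟩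
  simpa [hB.2 a] using congrFun hdiag a

theorem sq_card_le_of_conjTranspose_mul_self_mem_extremePoints {n : ℕ} {κ : Type*} [Fintype κ]
    [DecidableEq κ] {B : Matrix κ (Fin n) ℂ} (hB : IsUnit (B * Bᴴ))
    (hP : Bᴴ * B ∈ Set.extremePoints ℝ {Q : Matrix (Fin n) (Fin n) ℂ | IsCorrMat Q}) :
    Fintype.card κ ^ 2 ≤ n := by
  by_contra! hlt
  obtain ⟨A, hA, hA0, hdiag⟩ :=
    exists_isHermitian_ne_zero_diag_conjTranspose_mul_mul_eq_zero B (by simpa using hlt)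
  obtain ⟨ε, hε, hplus, hminus⟩ := hA.exists_posSemidef_one_add_smul_one_sub_smul
  have hdiag_smul : ∀ t : ℝ, (Bᴴ * (t • A) * B).diag = 0 := fun t => by
    simp [Matrix.mul_smul, Matrix.smul_mul, hdiag]
  have hadd := IsCorrMat.add_conjTranspose_mul_mul hP.1 hplus (hdiag_smul ε)
  have hsub := IsCorrMat.add_conjTranspose_mul_mul hP.1 (E := (-ε) • A)
    (by rwa [neg_smul, ← sub_eq_add_neg]) (hdiag_smul (-ε))
  rw [neg_smul, Matrix.mul_neg, Matrix.neg_mul, ← sub_eq_add_neg] at hsub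
  have hzero := eq_zero_of_add_mem_of_sub_mem_of_mem_extremePoints hP hadd hsub
  rw [Matrix.mul_smul, Matrix.smul_mul, smul_eq_zero] at hzero
  exact hA0 (eq_zero_of_conjTranspose_mul_mul_eq_zero hB (hzero.resolve_left hε.ne'))

theorem rank_le_sqrt_of_mem_extremePoints {n : ℕ} {P : Matrix (Fin n) (Fin n) ℂ}
    (hP : P ∈ Set.extremePoints ℝ {Q : Matrix (Fin n) (Fin n) ℂ | IsCorrMat Q}) :
    P.rank ≤ Nat.sqrt n := by
  obtain ⟨B, hBP, hB⟩ := (hP.1 : IsCorrMat P).1.exists_conjTranspose_mul_self_eq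
  rw [← hBP] at hP
  simpa [Nat.le_sqrt'] using sq_card_le_of_conjTranspose_mul_self_mem_extremePoints hB hP

theorem IsCorrMat.isDecomposable_of_rank_le {n r : ℕ} {P : Matrix (Fin n) (Fin n) ℂ}
    (hP : IsCorrMat P) (hrank : P.rank ≤ r) : IsDecomposable r P :=
  ⟨1, one_pos, fun _ => P, fun _ => ⟨hP, hrank⟩, by simp⟩

/-- Every extreme point of the set of `n × n` correlation matrices has rank at most
`⌊√n⌋`; consequently, for `r ≥ 2` every extreme point of `Corr(ℂ^{2r+1})` is
`r`-decomposable. -/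
theorem stmt15 :
    (∀ (n : ℕ) (P : Matrix (Fin n) (Fin n) ℂ),
      P ∈ Set.extremePoints ℝ {Q : Matrix (Fin n) (Fin n) ℂ | IsCorrMat Q} →
      P.rank ≤ Nat.sqrt n) ∧
    ∀ r : ℕ, 2 ≤ r → ∀ P : Matrix (Fin (2 * r + 1)) (Fin (2 * r + 1)) ℂ,
      P ∈ Set.extremePoints ℝ
        {Q : Matrix (Fin (2 * r + 1)) (Fin (2 * r + 1)) ℂ | IsCorrMat Q} →
      IsDecomposable r P := by
  refine ⟨fun n P hP => rank_le_sqrt_of_mem_extremePoints hP, fun r hr P hP => ?_⟩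
  have hsqrt : Nat.sqrt (2 * r + 1) ≤ r := Nat.lt_succ_iff.mp (Nat.sqrt_lt'.mpr (by nlinarith))
  exact (hP.1 : IsCorrMat P).isDecomposable_of_rank_le
    ((rank_le_sqrt_of_mem_extremePoints hP).trans hsqrt)
end

section
/- Let p ∈ (0,1) and let P be the 3×3 matrix with ones on the diagonal, P(1,2) = e^{iφ₁}p, P(1,3) = e^{iφ₂}√((1+p)/2), P(2,3) = e^{iφ₃}√((1+p)/2) (and conjugate entries below the diagonal), for phases φ₁, φ₂, φ₃ ∈ [0, 2π). Then det(P) = p(1+p)(−1 + cos(φ₁ − φ₂ + φ₃)) ≤ 0, and if P is positive semidefinite then det(P) = 0 and rank(P) = 2. -/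
/-!
With the off-diagonal entries in polar form `e^{iθ_k} r_k`, a unit-diagonal Hermitian 3×3 matrix
has determinant `1 - r₁² - r₂² - r₃² + 2 r₁ r₂ r₃ cos(θ₁ - θ₂ + θ₃)`; for the given moduli this is
`p(1+p)(cos(φ₁ - φ₂ + φ₃) - 1) ≤ 0`. Positive semidefiniteness forces the determinant to be
nonnegative, hence zero, so the rank is at most 2, and the leading 2×2 minor `1 - p² ≠ 0` shows it
is at least 2.
-/

open scoped ComplexOrder

open Complex ComplexConjugate

theorem Matrix.rank_lt_card_of_det_eq_zero_s17 {K n : Type*} [Field K] [Fintype n] [DecidableEq n]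
    {A : Matrix n n K} (h : A.det = 0) : A.rank < Fintype.card n := by
  obtain ⟨v, hv0, hv⟩ := Matrix.exists_mulVec_eq_zero_iff.mpr h
  have hker : 0 < Module.finrank K (LinearMap.ker A.mulVecLin) :=
    Module.finrank_pos_iff_exists_ne_zero.mpr ⟨⟨v, hv⟩, fun h => hv0 (congrArg Subtype.val h)⟩
  have := A.mulVecLin.finrank_range_add_finrank_ker
  rw [Module.finrank_fintype_fun_eq_card] at this
  rw [Matrix.rank]
  omega

theorem Matrix.card_le_rank_of_det_submatrix_ne_zero {K l m n : Type*} [Field K] [Fintype l]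
    [DecidableEq l] [Fintype n] (A : Matrix m n K) (r : l → m) (c : l → n)
    (h : (A.submatrix r c).det ≠ 0) : Fintype.card l ≤ A.rank :=
  (Matrix.rank_of_det_ne_zero h).symm.le.trans (A.rank_submatrix_le r c)

theorem det_unit_diagonal_hermitian_fin_three (a b c : ℂ) :
    !![1, a, b; conj a, 1, c; conj b, conj c, 1].det
      = ((1 - normSq a - normSq b - normSq c + 2 * (a * c * conj b).re : ℝ) : ℂ) := by
  rw [Matrix.det_fin_three]
  simp only [Matrix.of_apply, Matrix.cons_val', Matrix.cons_val_zero, Matrix.cons_val_one,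
    Matrix.cons_val_two, Matrix.empty_val', Matrix.cons_val_fin_one, Matrix.head_cons,
    Matrix.tail_cons, Matrix.head_fin_const]
  push_cast
  rw [re_eq_add_conj]
  simp only [← mul_conj, map_mul, conj_conj]
  ring

theorem conj_exp_mul_I_mul_ofReal (θ r : ℝ) : conj (exp (θ * I) * r) = exp (-(θ * I)) * r := by
  rw [map_mul, ← exp_conj, conj_ofReal, map_mul, conj_ofReal, conj_I, mul_neg]

theorem normSq_exp_mul_I_mul_ofReal (θ r : ℝ) : normSq (exp (θ * I) * r) = r ^ 2 := by
  rw [normSq_mul, normSq_ofReal, normSq_eq_norm_sq, norm_exp_ofReal_mul_I]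
  ring

theorem det_unit_diagonal_polar_fin_three (θ₁ θ₂ θ₃ r₁ r₂ r₃ : ℝ) :
    !![1, exp (θ₁ * I) * r₁, exp (θ₂ * I) * r₂;
      exp (-(θ₁ * I)) * r₁, 1, exp (θ₃ * I) * r₃;
      exp (-(θ₂ * I)) * r₂, exp (-(θ₃ * I)) * r₃, 1].det
      = ((1 - r₁ ^ 2 - r₂ ^ 2 - r₃ ^ 2 + 2 * r₁ * r₂ * r₃ * Real.cos (θ₁ - θ₂ + θ₃) : ℝ) : ℂ) := by
  rw [← conj_exp_mul_I_mul_ofReal θ₁ r₁, ← conj_exp_mul_I_mul_ofReal θ₂ r₂,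
    ← conj_exp_mul_I_mul_ofReal θ₃ r₃, det_unit_diagonal_hermitian_fin_three,
    normSq_exp_mul_I_mul_ofReal, normSq_exp_mul_I_mul_ofReal, normSq_exp_mul_I_mul_ofReal,
    conj_exp_mul_I_mul_ofReal]
  have : exp (θ₁ * I) * r₁ * (exp (θ₃ * I) * r₃) * (exp (-(θ₂ * I)) * r₂)
      = exp ((θ₁ - θ₂ + θ₃ : ℝ) * I) * (r₁ * r₂ * r₃ : ℝ) := by
    push_cast
    rw [show ((θ₁ : ℂ) - θ₂ + θ₃) * I = θ₁ * I + θ₃ * I + -(θ₂ * I) by ring, exp_add, exp_add]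
    ring
  rw [this, re_mul_ofReal, exp_ofReal_mul_I_re]
  ring_nf

open Complex in
theorem stmt17_general (p : ℝ) (hp0 : 0 < p) (hp1 : p < 1)
    (φ₁ φ₂ φ₃ : ℝ)
    (P : Matrix (Fin 3) (Fin 3) ℂ)
    (hP : P = !![1, exp (φ₁ * I) * p, exp (φ₂ * I) * (Real.sqrt ((1 + p) / 2) : ℝ);
      exp (-(φ₁ * I)) * p, 1, exp (φ₃ * I) * (Real.sqrt ((1 + p) / 2) : ℝ);
      exp (-(φ₂ * I)) * (Real.sqrt ((1 + p) / 2) : ℝ),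
        exp (-(φ₃ * I)) * (Real.sqrt ((1 + p) / 2) : ℝ), 1]) :
    P.det = ((p * (1 + p) * (-1 + Real.cos (φ₁ - φ₂ + φ₃)) : ℝ) : ℂ) ∧
    (p * (1 + p) * (-1 + Real.cos (φ₁ - φ₂ + φ₃)) : ℝ) ≤ 0 ∧
    (P.PosSemidef → P.det = 0 ∧ P.rank = 2) := by
  have hs : Real.sqrt ((1 + p) / 2) ^ 2 = (1 + p) / 2 := Real.sq_sqrt (by linarith)
  have hdet : P.det = ((p * (1 + p) * (-1 + Real.cos (φ₁ - φ₂ + φ₃)) : ℝ) : ℂ) := by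
    rw [hP, det_unit_diagonal_polar_fin_three]
    congr 1
    linear_combination (2 * p * Real.cos (φ₁ - φ₂ + φ₃) - 2) * hs
  have hle : p * (1 + p) * (-1 + Real.cos (φ₁ - φ₂ + φ₃)) ≤ 0 :=
    mul_nonpos_of_nonneg_of_nonpos (by positivity) (by linarith [Real.cos_le_one (φ₁ - φ₂ + φ₃)])
  refine ⟨hdet, hle, fun hPSD => ?_⟩
  have hdet0 : P.det = 0 := by
    have hnonneg := hPSD.det_nonneg
    rw [hdet, Complex.zero_le_real] at hnonneg
    rw [hdet, le_antisymm hle hnonneg, Complex.ofReal_zero]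
  have hminor : (P.submatrix Fin.castSucc Fin.castSucc : Matrix (Fin 2) (Fin 2) ℂ).det
      = ((1 - p ^ 2 : ℝ) : ℂ) := by
    have hphase : exp (φ₁ * I) * exp (-(φ₁ * I)) = 1 := by rw [← exp_add, add_neg_cancel, exp_zero]
    rw [Matrix.det_fin_two, hP]
    simp only [Matrix.submatrix_apply, Fin.castSucc_zero, Fin.castSucc_one, Matrix.of_apply,
      Matrix.cons_val', Matrix.cons_val_zero, Matrix.cons_val_one, Matrix.cons_val_fin_one, mul_one,
      ofReal_sub, ofReal_one, ofReal_pow]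
    linear_combination -(p : ℂ) ^ 2 * hphase
  have hminor0 : (P.submatrix Fin.castSucc Fin.castSucc : Matrix (Fin 2) (Fin 2) ℂ).det ≠ 0 := by
    rw [hminor, Complex.ofReal_ne_zero]
    nlinarith
  refine ⟨hdet0, le_antisymm ?_ ?_⟩
  · exact Nat.le_of_lt_succ (by simpa using Matrix.rank_lt_card_of_det_eq_zero_s17 hdet0)
  · simpa using P.card_le_rank_of_det_submatrix_ne_zero _ _ hminor0

open Complex in
/-- The determinant of the displayed 3×3 correlation-type matrix equals
`p(1+p)(-1 + cos(φ₁ - φ₂ + φ₃)) ≤ 0`; if the matrix is positive semidefinite then its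
determinant vanishes and it has rank 2. -/
theorem stmt17 (p : ℝ) (hp0 : 0 < p) (hp1 : p < 1)
    (φ₁ φ₂ φ₃ : ℝ) (h₁ : 0 ≤ φ₁ ∧ φ₁ < 2 * Real.pi)
    (h₂ : 0 ≤ φ₂ ∧ φ₂ < 2 * Real.pi) (h₃ : 0 ≤ φ₃ ∧ φ₃ < 2 * Real.pi)
    (P : Matrix (Fin 3) (Fin 3) ℂ)
    (hP : P = !![1, exp (φ₁ * I) * p, exp (φ₂ * I) * (Real.sqrt ((1 + p) / 2) : ℝ);
      exp (-(φ₁ * I)) * p, 1, exp (φ₃ * I) * (Real.sqrt ((1 + p) / 2) : ℝ);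
      exp (-(φ₂ * I)) * (Real.sqrt ((1 + p) / 2) : ℝ),
        exp (-(φ₃ * I)) * (Real.sqrt ((1 + p) / 2) : ℝ), 1]) :
    P.det = ((p * (1 + p) * (-1 + Real.cos (φ₁ - φ₂ + φ₃)) : ℝ) : ℂ) ∧
    (p * (1 + p) * (-1 + Real.cos (φ₁ - φ₂ + φ₃)) : ℝ) ≤ 0 ∧
    (P.PosSemidef → P.det = 0 ∧ P.rank = 2) :=
  stmt17_general p hp0 hp1 φ₁ φ₂ φ₃ P hP
end
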